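/- Suppose 0 < α ≤ 3, and let t₁, t₂ with t₀ ≤ t₁ ≤ t₂ be such that x(t₁) = x(t₂) and this common point belongs to S = argmin Φ. Then t₂^{α/3}·‖ẋ(t₂)‖ ≤ t₁^{α/3}·‖ẋ(t₁)‖. In particular, for α = 3, t₂·‖ẋ(t₂)‖ ≤ t₁·‖ẋ(t₁)‖. -/

import Mathlib

/-!
Lyapunov argument. Put `β = 2α/3` and fix any `z`. Along `(AVD)_α` the energy
`E(t) = t^β (Φ(x) - Φ(z) + ‖ẋ‖²/2) + β t^(β-1) ⟪ẋ, x - z⟫ + β(β+2)/4 · t^(β-2) ‖x - z‖²`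
has derivative `β t^(β-1) (Φ(x) - Φ(z) - ⟪∇Φ(x), x - z⟫) + β(β+2)(β-2)/4 · t^(β-3) ‖x - z‖²`:
the coefficients are exactly those for which the `‖ẋ‖²` and `⟪ẋ, x - z⟫` terms cancel. By
convexity and `0 ≤ β ≤ 2` this is nonpositive, so `E` decreases. For `z = x(t₁) = x(t₂)` only
the kinetic term survives at `t₁` and `t₂`, giving `t₂^β ‖ẋ(t₂)‖² ≤ t₁^β ‖ẋ(t₁)‖²`.
-/

open Set Real InnerProductSpace

theorem ConvexOn.add_fderiv_le {E : Type*} [NormedAddCommGroup E] [NormedSpace ℝ E]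
    {Φ : E → ℝ} {Φ' : E →L[ℝ] ℝ} {u : E} (hΦ : ConvexOn ℝ univ Φ) (hd : HasFDerivAt Φ Φ' u)
    (w : E) : Φ u + Φ' (w - u) ≤ Φ w := by
  have hline : ConvexOn ℝ univ (Φ ∘ AffineMap.lineMap (k := ℝ) u w) := by
    simpa using hΦ.comp_affineMap (AffineMap.lineMap u w)
  have hderiv : HasDerivAt (Φ ∘ AffineMap.lineMap (k := ℝ) u w) (Φ' (w - u)) 0 := by
    apply HasFDerivAt.comp_hasDerivAt
    · simpa using hd
    · exact AffineMap.hasDerivAt_lineMap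
  have := hline.le_slope_of_hasDerivAt (mem_univ 0) (mem_univ 1) one_pos hderiv
  simp only [slope_def_field, Function.comp_apply, AffineMap.lineMap_apply_one,
    AffineMap.lineMap_apply_zero, sub_zero, div_one] at this
  linarith

theorem ConvexOn.add_inner_gradient_le {H : Type*} [NormedAddCommGroup H] [InnerProductSpace ℝ H]
    [CompleteSpace H] {Φ : H → ℝ} {g u : H} (hΦ : ConvexOn ℝ univ Φ) (hd : HasGradientAt Φ g u)
    (w : H) : Φ u + ⟪g, w - u⟫_ℝ ≤ Φ w := by
  simpa using hΦ.add_fderiv_le hd.hasFDerivAt w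

section AVDEnergy

variable {H : Type*} [NormedAddCommGroup H] [InnerProductSpace ℝ H]

noncomputable def avdEnergy (Φ : H → ℝ) (β : ℝ) (x : ℝ → H) (z : H) (t : ℝ) : ℝ :=
  t ^ β * (Φ (x t) - Φ z + ‖deriv x t‖ ^ 2 / 2) + β * t ^ (β - 1) * ⟪deriv x t, x t - z⟫_ℝ
    + β * (β + 2) / 4 * t ^ (β - 2) * ‖x t - z‖ ^ 2

theorem hasDerivAt_avdEnergy [CompleteSpace H] {Φ : H → ℝ} {α β : ℝ} (hαβ : 2 * α = 3 * β)
    {x : ℝ → H} (z : H) {t : ℝ} (ht : t ≠ 0) (hΦ : DifferentiableAt ℝ Φ (x t))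
    (hx : DifferentiableAt ℝ x t) (hv : DifferentiableAt ℝ (deriv x) t)
    (hode : deriv (deriv x) t + (α / t) • deriv x t + gradient Φ (x t) = 0) :
    HasDerivAt (avdEnergy Φ β x z)
      (β * t ^ (β - 1) * (Φ (x t) - Φ z - ⟪gradient Φ (x t), x t - z⟫_ℝ)
        + β * (β + 2) * (β - 2) / 4 * t ^ (β - 3) * ‖x t - z‖ ^ 2) t := by
  set v := deriv x
  have hacc : deriv v t = -((α / t) • v t) - gradient Φ (x t) := by
    linear_combination (norm := module) hode
  have hΦx : HasDerivAt (fun s ↦ Φ (x s)) ⟪gradient Φ (x t), v t⟫_ℝ t :=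
    (hΦ.hasGradientAt.hasFDerivAt.comp_hasDerivAt t hx.hasDerivAt).congr_deriv (by simp [v])
  have hw : HasDerivAt (fun s ↦ x s - z) (v t) t := hx.hasDerivAt.sub_const z
  have hpow : ∀ γ : ℝ, HasDerivAt (fun s : ℝ ↦ s ^ γ) (γ * t ^ (γ - 1)) t :=
    fun γ ↦ hasDerivAt_rpow_const (Or.inl ht)
  have hE := ((hpow β).mul ((hΦx.sub_const (Φ z)).add (hv.hasDerivAt.norm_sq.div_const 2))).add
    (((hpow (β - 1)).const_mul β).mul (hv.hasDerivAt.inner ℝ hw)) |>.add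
    (((hpow (β - 2)).const_mul (β * (β + 2) / 4)).mul hw.norm_sq)
  refine hE.congr_deriv ?_
  have hstep : ∀ γ : ℝ, t ^ γ = t ^ (γ - 1) * t := fun γ ↦ by
    rw [← rpow_add_one ht, sub_add_cancel]
  obtain rfl : α = 3 * β / 2 := by linarith
  rw [hacc, hstep β, hstep (β - 1), show β - 1 - 1 = β - 2 by ring, hstep (β - 2),
    show β - 2 - 1 = β - 3 by ring]
  simp only [inner_sub_left, inner_neg_left, real_inner_smul_left, inner_sub_right, inner_neg_right,
    real_inner_smul_right, real_inner_self_eq_norm_sq, Pi.add_apply, real_inner_comm (v t)]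
  field_simp
  ring

theorem avdEnergy_deriv_nonpos [CompleteSpace H] {Φ : H → ℝ} (hΦ : ConvexOn ℝ univ Φ) {β : ℝ}
    (hβ₀ : 0 ≤ β) (hβ₂ : β ≤ 2) {u z : H} (hu : DifferentiableAt ℝ Φ u) {t : ℝ} (ht : 0 < t) :
    β * t ^ (β - 1) * (Φ u - Φ z - ⟪gradient Φ u, u - z⟫_ℝ)
      + β * (β + 2) * (β - 2) / 4 * t ^ (β - 3) * ‖u - z‖ ^ 2 ≤ 0 := by
  have hgap : Φ u - Φ z - ⟪gradient Φ u, u - z⟫_ℝ ≤ 0 := by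
    have := hΦ.add_inner_gradient_le hu.hasGradientAt z
    rw [← neg_sub u z, inner_neg_right] at this
    linarith
  have hcoeff : β * (β + 2) * (β - 2) / 4 ≤ 0 :=
    div_nonpos_of_nonpos_of_nonneg (mul_nonpos_of_nonneg_of_nonpos (by positivity) (by linarith))
      zero_le_four
  exact add_nonpos (mul_nonpos_of_nonneg_of_nonpos (by positivity) hgap)
    (mul_nonpos_of_nonpos_of_nonneg (mul_nonpos_of_nonpos_of_nonneg hcoeff (by positivity))
      (by positivity))

theorem antitoneOn_avdEnergy [CompleteSpace H] {Φ : H → ℝ} (hΦ : ConvexOn ℝ univ Φ)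
    (hΦd : Differentiable ℝ Φ) {α β : ℝ} (hαβ : 2 * α = 3 * β) (hβ₀ : 0 ≤ β) (hβ₂ : β ≤ 2)
    {x : ℝ → H} (hx : Differentiable ℝ x) (hv : Differentiable ℝ (deriv x)) (z : H) {t₀ : ℝ}
    (ht₀ : 0 < t₀)
    (hode : ∀ t, t₀ ≤ t → deriv (deriv x) t + (α / t) • deriv x t + gradient Φ (x t) = 0) :
    AntitoneOn (avdEnergy Φ β x z) (Ici t₀) := by
  have hE : ∀ t ∈ Ici t₀, HasDerivAt (avdEnergy Φ β x z) _ t := fun t ht ↦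
    hasDerivAt_avdEnergy hαβ z (ht₀.trans_le ht).ne' (hΦd _) (hx t) (hv t) (hode t ht)
  refine antitoneOn_of_deriv_nonpos (convex_Ici t₀)
    (fun t ht ↦ (hE t ht).continuousAt.continuousWithinAt)
    (fun t ht ↦ (hE t (interior_subset ht)).differentiableAt.differentiableWithinAt)
    (fun t ht ↦ ?_)
  rw [interior_Ici] at ht
  rw [(hE t (mem_Ici.2 ht.le)).deriv]
  exact avdEnergy_deriv_nonpos hΦ hβ₀ hβ₂ (hΦd _) (ht₀.trans ht)

theorem avdEnergy_of_eq {Φ : H → ℝ} {β : ℝ} {x : ℝ → H} {z : H} {t : ℝ} (h : x t = z) :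
    avdEnergy Φ β x z t = t ^ β * ‖deriv x t‖ ^ 2 / 2 := by
  simp [avdEnergy, h, mul_div_assoc]

end AVDEnergy

theorem stmt_10_general
    {H : Type*} [NormedAddCommGroup H] [InnerProductSpace ℝ H] [CompleteSpace H]
    (Φ : H → ℝ) (hΦconv : ConvexOn ℝ Set.univ Φ) (hΦC1 : ContDiff ℝ 1 Φ)
    (α t₀ : ℝ) (hα0 : 0 < α) (hα3 : α ≤ 3) (ht₀ : 0 < t₀)
    (x : ℝ → H) (hx : ContDiff ℝ 2 x)
    (hode : ∀ t : ℝ, t₀ ≤ t →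
      deriv (deriv x) t + (α / t) • deriv x t + gradient Φ (x t) = 0)
    (t₁ t₂ : ℝ) (ht₁ : t₀ ≤ t₁) (ht₁₂ : t₁ ≤ t₂)
    (heq : x t₁ = x t₂) :
    t₂ ^ (α / 3) * ‖deriv x t₂‖ ≤ t₁ ^ (α / 3) * ‖deriv x t₁‖ := by
  have ht₁0 : 0 < t₁ := ht₀.trans_le ht₁
  have ht₂0 : 0 < t₂ := ht₁0.trans_le ht₁₂
  have hE := antitoneOn_avdEnergy (β := 2 * α / 3) hΦconv (hΦC1.differentiable one_ne_zero)
    (by ring) (by positivity) (by linarith) (hx.differentiable two_ne_zero)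
    hx.differentiable_deriv_two (x t₁) ht₀ hode ht₁ (ht₁.trans ht₁₂) ht₁₂
  rw [avdEnergy_of_eq rfl, avdEnergy_of_eq heq.symm] at hE
  have hsq : ∀ t, 0 < t →
      (t ^ (α / 3) * ‖deriv x t‖) ^ 2 = t ^ (2 * α / 3) * ‖deriv x t‖ ^ 2 := fun t ht ↦ by
    rw [mul_pow, ← rpow_mul_natCast ht.le]
    ring_nf
  refine (pow_le_pow_iff_left₀ (by positivity) (by positivity) two_ne_zero).mp ?_
  rw [hsq t₁ ht₁0, hsq t₂ ht₂0]
  linarith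

/-- for `0 < α ≤ 3`, if a trajectory of `(AVD)_α` satisfies
`x(t₁) = x(t₂) ∈ argmin Φ` with `t₀ ≤ t₁ ≤ t₂`, then
`t₂^{α/3} ‖ẋ(t₂)‖ ≤ t₁^{α/3} ‖ẋ(t₁)‖`. -/
theorem stmt_10
    {H : Type*} [NormedAddCommGroup H] [InnerProductSpace ℝ H] [CompleteSpace H]
    (Φ : H → ℝ) (hΦconv : ConvexOn ℝ Set.univ Φ) (hΦC1 : ContDiff ℝ 1 Φ)
    (S : Set H) (hS : S = {z : H | ∀ y : H, Φ z ≤ Φ y}) (hSne : S.Nonempty)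
    (α t₀ : ℝ) (hα0 : 0 < α) (hα3 : α ≤ 3) (ht₀ : 0 < t₀)
    (x : ℝ → H) (hx : ContDiff ℝ 2 x)
    (hode : ∀ t : ℝ, t₀ ≤ t →
      deriv (deriv x) t + (α / t) • deriv x t + gradient Φ (x t) = 0)
    (t₁ t₂ : ℝ) (ht₁ : t₀ ≤ t₁) (ht₁₂ : t₁ ≤ t₂)
    (heq : x t₁ = x t₂) (hmem : x t₁ ∈ S) :
    t₂ ^ (α / 3) * ‖deriv x t₂‖ ≤ t₁ ^ (α / 3) * ‖deriv x t₁‖ :=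
  stmt_10_general Φ hΦconv hΦC1 α t₀ hα0 hα3 ht₀ x hx hode t₁ t₂ ht₁ ht₁₂ heq
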